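/- arXiv:2211.02975 — 4 statements merged into one kernel-verified Lean document; each statement's English description precedes it below -/
import Mathlib

section
/- Every element f = (f₁, f₂) in the uniform closure of L = span{(βᵏ, (2β)ᵏ)ᵀ : k ∈ ℕ} ⊆ C([1,2],ℝ²) satisfies f₁(2) = f₂(1); hence this closure is a proper subspace of C([1,2],ℝ²). -/
/-!
The functionals `f ↦ f₁(2)` and `f ↦ f₂(1)` are continuous and linear on `C([1,2],ℝ²)` and agree
on every generator, since `2ᵏ = (2·1)ᵏ`; hence they agree on the closure of the span. The constant
function `(1, 0)` separates them.
-/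

/-- The set `L = {β ↦ (βᵏ, (2β)ᵏ) : k ∈ ℕ} ⊆ C([1,2],ℝ²)`, spanning the reachable set of
the ensemble system with system matrix `β·diag(1,2)` and control vector `(1,1)ᵀ`. -/
noncomputable def Lset : Set C(Set.Icc (1:ℝ) 2, ℝ × ℝ) :=
  Set.range fun k : ℕ => ⟨fun β => ((β : ℝ) ^ k, (2 * (β : ℝ)) ^ k), by fun_prop⟩

open ContinuousLinearMap ContinuousMap

lemma eqOn_Lset_fst_two_snd_one :
    Set.EqOn (fst ℝ ℝ ℝ ∘L evalCLM ℝ ⟨(2:ℝ), by norm_num⟩)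
      (snd ℝ ℝ ℝ ∘L evalCLM ℝ ⟨(1:ℝ), by norm_num⟩) Lset := by
  rintro _ ⟨k, rfl⟩
  simp

lemma fst_two_eq_snd_one_of_mem_closure_span_Lset {f : C(Set.Icc (1:ℝ) 2, ℝ × ℝ)}
    (hf : f ∈ closure (Submodule.span ℝ Lset : Set C(Set.Icc (1:ℝ) 2, ℝ × ℝ))) :
    (f ⟨2, by norm_num⟩).1 = (f ⟨1, by norm_num⟩).2 :=
  eqOn_closure_span eqOn_Lset_fst_two_snd_one hf

/-- Every `f = (f₁,f₂)` in the uniform closure of `span L` satisfies `f₁(2) = f₂(1)`;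
hence this closure is a proper subspace of `C([1,2],ℝ²)`. -/
theorem stmt2 :
    (∀ f ∈ closure ((Submodule.span ℝ Lset :
        Submodule ℝ C(Set.Icc (1:ℝ) 2, ℝ × ℝ)) : Set C(Set.Icc (1:ℝ) 2, ℝ × ℝ)),
      (f ⟨2, by norm_num⟩).1 = (f ⟨1, by norm_num⟩).2) ∧
    closure ((Submodule.span ℝ Lset :
        Submodule ℝ C(Set.Icc (1:ℝ) 2, ℝ × ℝ)) : Set C(Set.Icc (1:ℝ) 2, ℝ × ℝ)) ≠ Set.univ := by
  refine ⟨fun f hf => fst_two_eq_snd_one_of_mem_closure_span_Lset hf, fun h => ?_⟩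
  have := fst_two_eq_snd_one_of_mem_closure_span_Lset (f := .const _ ((1:ℝ), (0:ℝ))) (h ▸ trivial)
  simp at this
end

section
/- Let A ∈ ℝⁿˣⁿ be similar to a companion matrix (i.e., A is cyclic) and B ∈ ℝⁿˣᵐ. Then the system dx/dt = Ax + Bu is controllable on ℝⁿ if and only if there exists b ∈ Im(B) such that span{b, Ab, ..., Aⁿ⁻¹b} = ℝⁿ. -/
open Polynomial Set

noncomputable def Lsum (m : ℕ) (g : Fin m → ℝ[X]) : (Fin m → ℝ) →ₗ[ℝ] ℝ[X] :=
  Fintype.linearCombination ℝ g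

lemma Lsum_apply (m : ℕ) (g : Fin m → ℝ[X]) (x : Fin m → ℝ) :
    Lsum m g x = ∑ i, x i • g i := by
  simp [Lsum, Fintype.linearCombination_apply]

lemma core {m : ℕ} (p : ℝ[X]) (hp : p ≠ 0) (g : Fin m → ℝ[X])
    (h : Ideal.span (Set.range g) ⊔ Ideal.span {p} = ⊤) :
    ∃ x : Fin m → ℝ, IsCoprime (∑ i, x i • g i) p := by
  by_cases hu : IsUnit p
  · exact ⟨0, by simpa using (isCoprime_zero_left (x := p)).mpr hu⟩
  classical
  set F : Multiset ℝ[X] := UniqueFactorizationMonoid.factors p with hF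
  -- submodules of bad coefficients
  let S : ℝ[X] → Submodule ℝ (Fin m → ℝ) := fun q =>
    Submodule.comap (Lsum m g) ((Ideal.span {q}).restrictScalars ℝ)
  have hSproper : ∀ q ∈ F, S q ≠ ⊤ := by
    intro q hq hstop
    have hqp : q ∣ p := UniqueFactorizationMonoid.dvd_of_mem_factors hq
    have hqprime : Prime q := UniqueFactorizationMonoid.prime_of_factor q hq
    have hdvd : ∀ i, q ∣ g i := by
      intro i
      have : (Pi.single i (1:ℝ) : Fin m → ℝ) ∈ S q := by rw [hstop]; trivial
      simpa [S, Lsum_apply, Pi.single_apply, Ideal.mem_span_singleton] using this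
    have : Ideal.span (Set.range g) ⊔ Ideal.span {p} ≤ Ideal.span {q} := by
      apply sup_le
      · rw [Ideal.span_le]
        rintro _ ⟨i, rfl⟩
        exact Ideal.mem_span_singleton.mpr (hdvd i)
      · rw [Ideal.span_le]
        simpa [Set.singleton_subset_iff, Ideal.mem_span_singleton] using hqp
    rw [h, top_le_iff] at this
    have : q ∣ 1 := Ideal.mem_span_singleton.mp (this ▸ Submodule.mem_top (x := (1:ℝ[X])))
    exact hqprime.not_unit (isUnit_of_dvd_one this)
  -- avoid the finitely many proper subspaces
  have : ∃ x : Fin m → ℝ, ∀ q ∈ F, x ∉ S q := by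
    by_contra hc
    push_neg at hc
    have hcover : ⋃ W ∈ (F.toFinset.image S), (W : Set (Fin m → ℝ)) = Set.univ := by
      apply Set.eq_univ_of_forall
      intro x
      obtain ⟨q, hq, hxq⟩ := hc x
      simp only [Set.mem_iUnion]
      exact ⟨S q, by exact Finset.mem_image.mpr ⟨q, Multiset.mem_toFinset.mpr hq, rfl⟩, hxq⟩
    have htop := Subspace.top_mem_of_biUnion_eq_univ hcover
    simp only [Finset.mem_image] at htop
    obtain ⟨q, hq, hqt⟩ := htop
    exact hSproper q (Multiset.mem_toFinset.mp hq) hqt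
  obtain ⟨x, hx⟩ := this
  refine ⟨x, ?_⟩
  by_contra hnc
  -- get a common irreducible factor
  have hg0 : EuclideanDomain.gcd (∑ i, x i • g i) p ≠ 0 := by
    intro h0
    exact hp (EuclideanDomain.gcd_eq_zero_iff.mp h0).2
  have hgu : ¬ IsUnit (EuclideanDomain.gcd (∑ i, x i • g i) p) := by
    intro hU
    exact hnc (EuclideanDomain.gcd_isUnit_iff.mp hU)
  obtain ⟨q, hqirr, hqdvd⟩ := WfDvdMonoid.exists_irreducible_factor hgu hg0
  have hq1 : q ∣ ∑ i, x i • g i := hqdvd.trans (EuclideanDomain.gcd_dvd_left _ _)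
  have hq2 : q ∣ p := hqdvd.trans (EuclideanDomain.gcd_dvd_right _ _)
  obtain ⟨q', hq'F, hassoc⟩ := UniqueFactorizationMonoid.exists_mem_factors_of_dvd hp hqirr hq2
  exact hx q' hq'F (by
    simp only [S, Submodule.mem_comap, Submodule.restrictScalars_mem, Ideal.mem_span_singleton,
      Lsum_apply]
    exact hassoc.symm.dvd.trans hq1)



variable {n : ℕ}

local notation "V" => (Fin n → ℝ)

lemma pow_apply_mem {f : V →ₗ[ℝ] V} {S : Submodule ℝ V} (hS : ∀ w ∈ S, f w ∈ S)
    (k : ℕ) {w : V} (hw : w ∈ S) : (f ^ k) w ∈ S := by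
  induction k with
  | zero => simpa using hw
  | succ k ih => rw [pow_succ']; exact hS _ ih

lemma aeval_apply_mem {f : V →ₗ[ℝ] V} {S : Submodule ℝ V} (hS : ∀ w ∈ S, f w ∈ S)
    (c : ℝ[X]) {w : V} (hw : w ∈ S) : (aeval f c) w ∈ S := by
  rw [aeval_eq_sum_range]
  simp only [LinearMap.coe_sum, Finset.sum_apply, LinearMap.smul_apply]
  exact Submodule.sum_mem _ fun i _ => Submodule.smul_mem _ _ (pow_apply_mem hS i hw)

/-- The span of the first `n` powers applied to `b` is invariant under `f`, and contains
all powers. -/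
lemma finSpan_invariant (f : V →ₗ[ℝ] V) (hn : 0 < n) (b : V) :
    ∀ w ∈ Submodule.span ℝ (Set.range fun j : Fin n => (f ^ (j : ℕ)) b), f w ∈
      Submodule.span ℝ (Set.range fun j : Fin n => (f ^ (j : ℕ)) b) := by
  set S := Submodule.span ℝ (Set.range fun j : Fin n => (f ^ (j : ℕ)) b) with hSdef
  have hgen : ∀ j : Fin n, (f ^ (j : ℕ)) b ∈ S := fun j => Submodule.subset_span ⟨j, rfl⟩
  have hnpow : (f ^ n) b ∈ S := by
    have hch := LinearMap.aeval_self_charpoly f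
    have hdeg : (LinearMap.charpoly f).natDegree = n := by
      rw [LinearMap.charpoly_natDegree, Module.finrank_fin_fun]
    have hmon := LinearMap.charpoly_monic f
    have h0 : (aeval f (LinearMap.charpoly f)) b = 0 := by rw [hch]; rfl
    rw [aeval_eq_sum_range' (n := n + 1) (by omega)] at h0
    simp only [LinearMap.coe_sum, Finset.sum_apply, LinearMap.smul_apply] at h0
    rw [Finset.sum_range_succ] at h0
    have hcn : (LinearMap.charpoly f).coeff n = 1 := by
      have := hmon.coeff_natDegree
      rwa [hdeg] at this
    rw [hcn, one_smul] at h0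
    have heq : (f ^ n) b = -∑ i ∈ Finset.range n,
        (LinearMap.charpoly f).coeff i • (f ^ i) b := eq_neg_of_add_eq_zero_right h0
    rw [heq]
    refine Submodule.neg_mem _ (Submodule.sum_mem _ fun i hi => Submodule.smul_mem _ _ ?_)
    exact hgen ⟨i, Finset.mem_range.mp hi⟩
  intro w hw
  induction hw using Submodule.span_induction with
  | mem w hw =>
    obtain ⟨j, rfl⟩ := hw
    have : f ((f ^ (j : ℕ)) b) = (f ^ ((j : ℕ) + 1)) b := by rw [pow_succ']; rfl
    rw [this]
    by_cases hj : (j : ℕ) + 1 < n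
    · exact hgen ⟨(j : ℕ) + 1, hj⟩
    · have : (j : ℕ) + 1 = n := by omega
      rw [this]; exact hnpow
  | zero => simp
  | add u v _ _ hu hv => rw [map_add]; exact Submodule.add_mem _ hu hv
  | smul c u _ hu => rw [map_smul]; exact Submodule.smul_mem _ _ hu

lemma pow_apply_mem_finSpan (f : V →ₗ[ℝ] V) (hn : 0 < n) (b : V) (k : ℕ) :
    (f ^ k) b ∈ Submodule.span ℝ (Set.range fun j : Fin n => (f ^ (j : ℕ)) b) := by
  have hb : b ∈ Submodule.span ℝ (Set.range fun j : Fin n => (f ^ (j : ℕ)) b) := by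
    have h0 : (f ^ ((⟨0, hn⟩ : Fin n) : ℕ)) b ∈
        Submodule.span ℝ (Set.range fun j : Fin n => (f ^ (j : ℕ)) b) :=
      Submodule.subset_span ⟨⟨0, hn⟩, rfl⟩
    simpa using h0
  exact pow_apply_mem (finSpan_invariant f hn b) k hb

/-- The evaluation map `g ↦ (aeval f g) v`. -/
noncomputable def Phi (f : V →ₗ[ℝ] V) (v : V) : ℝ[X] →ₗ[ℝ] V where
  toFun g := (aeval f g) v
  map_add' a b := by simp [map_add]
  map_smul' c a := by simp

lemma Phi_apply (f : V →ₗ[ℝ] V) (v : V) (g : ℝ[X]) : Phi f v g = (aeval f g) v := rfl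

lemma Phi_mul (f : V →ₗ[ℝ] V) (v : V) (a b : ℝ[X]) :
    Phi f v (a * b) = (aeval f a) (Phi f v b) := by
  simp [Phi_apply, map_mul, Module.End.mul_apply]

lemma Phi_X_pow_mul (f : V →ₗ[ℝ] V) (v : V) (k : ℕ) (b : ℝ[X]) :
    Phi f v (X ^ k * b) = (f ^ k) (Phi f v b) := by
  rw [Phi_mul, map_pow, aeval_X]

/-- The kernel of `Phi f v` as an ideal of `ℝ[X]`. -/
noncomputable def kerIdeal (f : V →ₗ[ℝ] V) (v : V) : Ideal ℝ[X] where
  carrier := {g | Phi f v g = 0}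
  add_mem' := by intro a b ha hb; simp_all [Set.mem_setOf_eq, map_add]
  zero_mem' := by simp [Set.mem_setOf_eq]
  smul_mem' := by
    intro c g hg
    simp only [Set.mem_setOf_eq, smul_eq_mul] at *
    rw [Phi_mul, hg, map_zero]

lemma mem_kerIdeal_iff (f : V →ₗ[ℝ] V) (v : V) (g : ℝ[X]) :
    g ∈ kerIdeal f v ↔ Phi f v g = 0 := Iff.rfl

/-- If `v` is a cyclic vector then `Phi f v` is surjective. -/
lemma Phi_surjective (f : V →ₗ[ℝ] V) (v : V)
    (hv : Submodule.span ℝ (Set.range fun k : Fin n => (f ^ (k : ℕ)) v) = ⊤) :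
    Function.Surjective (Phi f v) := by
  intro w
  have hw : w ∈ LinearMap.range (Phi f v) := by
    have hle : Submodule.span ℝ (Set.range fun k : Fin n => (f ^ (k : ℕ)) v) ≤
        LinearMap.range (Phi f v) := by
      rw [Submodule.span_le]
      rintro _ ⟨k, rfl⟩
      exact ⟨X ^ (k : ℕ), by rw [Phi_apply, map_pow, aeval_X]⟩
    rw [hv] at hle
    exact hle trivial
  exact hw

/-- span of all powers applied to `Phi f v h` equals image of the principal ideal `(h)`. -/
lemma span_powers_eq_map (f : V →ₗ[ℝ] V) (v : V) (h : ℝ[X]) :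
    Submodule.span ℝ (Set.range fun k : ℕ => (f ^ k) (Phi f v h)) =
      Submodule.map (Phi f v) ((Ideal.span {h}).restrictScalars ℝ) := by
  apply le_antisymm
  · rw [Submodule.span_le]
    rintro _ ⟨k, rfl⟩
    refine ⟨X ^ k * h, ?_, (Phi_X_pow_mul f v k h)⟩
    exact Ideal.mem_span_singleton.mpr ⟨X ^ k, mul_comm _ _⟩
  · rintro _ ⟨r, hr, rfl⟩
    have hr' : h ∣ r := Ideal.mem_span_singleton.mp hr
    obtain ⟨c, rfl⟩ := hr'
    rw [mul_comm, Phi_mul]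
    have hinv : ∀ w ∈ Submodule.span ℝ (Set.range fun k : ℕ => (f ^ k) (Phi f v h)),
        f w ∈ Submodule.span ℝ (Set.range fun k : ℕ => (f ^ k) (Phi f v h)) := by
      intro w hw
      induction hw using Submodule.span_induction with
      | mem w hw =>
        obtain ⟨k, rfl⟩ := hw
        have : f ((f ^ k) (Phi f v h)) = (f ^ (k + 1)) (Phi f v h) := by
          rw [pow_succ']; rfl
        simp only []
        rw [this]
        exact Submodule.subset_span ⟨k + 1, rfl⟩
      | zero => simp
      | add u v _ _ hu hv => rw [map_add]; exact Submodule.add_mem _ hu hv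
      | smul c u _ hu => rw [map_smul]; exact Submodule.smul_mem _ _ hu
    refine aeval_apply_mem hinv c ?_
    refine Submodule.subset_span ⟨0, ?_⟩
    simp

/-- image of an ideal is everything iff the ideal together with the kernel is everything. -/
lemma Phi_map_eq_top_iff (f : V →ₗ[ℝ] V) (v : V)
    (hsurj : Function.Surjective (Phi f v)) (J : Ideal ℝ[X]) :
    Submodule.map (Phi f v) (J.restrictScalars ℝ) = ⊤ ↔ J ⊔ kerIdeal f v = ⊤ := by
  constructor
  · intro hmap
    rw [eq_top_iff]
    intro h _
    have : Phi f v h ∈ Submodule.map (Phi f v) (J.restrictScalars ℝ) := by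
      rw [hmap]; trivial
    obtain ⟨j, hj, hjh⟩ := this
    have : h = j + (h - j) := by ring
    rw [this]
    refine Submodule.add_mem _ (Submodule.mem_sup_left hj) (Submodule.mem_sup_right ?_)
    rw [mem_kerIdeal_iff, map_sub, hjh, sub_self]
  · intro hsup
    rw [eq_top_iff]
    intro w _
    obtain ⟨h, rfl⟩ := hsurj w
    have : h ∈ J ⊔ kerIdeal f v := by rw [hsup]; trivial
    obtain ⟨a, ha, b, hb, rfl⟩ := Submodule.mem_sup.mp this
    rw [map_add, (mem_kerIdeal_iff f v b).mp hb, add_zero]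
    exact ⟨a, ha, rfl⟩

lemma mulVec_pow (A : Matrix (Fin n) (Fin n) ℝ) (k : ℕ) :
    ∀ w : V, (A ^ k).mulVec w = (A.mulVecLin ^ k) w := by
  induction k with
  | zero => intro w; simp [Matrix.one_mulVec]
  | succ k ih =>
    intro w
    rw [pow_succ', pow_succ', ← Matrix.mulVec_mulVec, ih, Module.End.mul_apply,
      Matrix.mulVecLin_apply]

/-- Let `A ∈ ℝⁿˣⁿ` be cyclic (similar to a companion matrix), i.e., some vector generates
`ℝⁿ` under the action of `A`. Then the system `dx/dt = Ax + Bu` is controllable on `ℝⁿ` iff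
there exists `b ∈ Im(B)` with `span{b, Ab, ..., Aⁿ⁻¹b} = ℝⁿ`. -/
theorem stmt7 (n m : ℕ) (A : Matrix (Fin n) (Fin n) ℝ) (B : Matrix (Fin n) (Fin m) ℝ)
    (hcyc : ∃ v : Fin n → ℝ,
      Submodule.span ℝ (Set.range fun k : Fin n => (A ^ (k : ℕ)).mulVec v) = ⊤) :
    (Submodule.span ℝ
        {y : Fin n → ℝ | ∃ (k : Fin n) (x : Fin m → ℝ),
          y = (A ^ (k : ℕ)).mulVec (B.mulVec x)} = ⊤) ↔
    (∃ x : Fin m → ℝ,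
        Submodule.span ℝ
          (Set.range fun k : Fin n => (A ^ (k : ℕ)).mulVec (B.mulVec x)) = ⊤) := by
  constructor
  · intro hT
    rcases Nat.eq_zero_or_pos n with hn | hn
    · subst hn
      exact ⟨0, Subsingleton.elim _ _⟩
    obtain ⟨v, hv⟩ := hcyc
    set f := A.mulVecLin with hf
    simp only [mulVec_pow] at hv hT
    have hsurj := Phi_surjective f v hv
    obtain ⟨p, hpK⟩ := (IsPrincipalIdealRing.principal (kerIdeal f v)).principal
    rw [Ideal.submodule_span_eq] at hpK
    -- p ≠ 0
    have hchmem : (LinearMap.charpoly f) ∈ kerIdeal f v := by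
      rw [mem_kerIdeal_iff, Phi_apply, LinearMap.aeval_self_charpoly]
      rfl
    have hp0 : p ≠ 0 := by
      rintro rfl
      rw [hpK, Ideal.span_singleton_eq_bot.mpr rfl] at hchmem
      exact (LinearMap.charpoly_monic f).ne_zero (by simpa using hchmem)
    -- polynomials representing the columns of B
    have hcols : ∀ i : Fin m, ∃ gi : ℝ[X], Phi f v gi = B.mulVec (Pi.single i 1) :=
      fun i => hsurj _
    choose g hg using hcols
    -- B x = Phi f v (∑ i, x i • g i)
    have hBx : ∀ x : Fin m → ℝ, B.mulVec x = Phi f v (∑ i, x i • g i) := by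
      intro x
      have hxdecomp : x = ∑ i, x i • (Pi.single i 1 : Fin m → ℝ) := by
        have : ∀ i : Fin m, x i • (Pi.single i 1 : Fin m → ℝ) = Pi.single i (x i) := by
          intro i
          rw [← Pi.single_smul, smul_eq_mul, mul_one]
        simp_rw [this]
        rw [Finset.univ_sum_single]
      calc B.mulVec x = B.mulVecLin x := rfl
        _ = ∑ i, x i • B.mulVecLin (Pi.single i 1) := by
            conv_lhs => rw [hxdecomp]
            rw [map_sum]
            simp_rw [map_smul]
        _ = ∑ i, x i • Phi f v (g i) := by simp_rw [Matrix.mulVecLin_apply, ← hg]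
        _ = Phi f v (∑ i, x i • g i) := by rw [map_sum]; simp_rw [map_smul]
    -- the ℕ-power span equals the image of the ideal generated by the `g i`
    set J := Ideal.span (Set.range g) with hJ
    set TN := Submodule.span ℝ
      {y : Fin n → ℝ | ∃ (k : ℕ) (x : Fin m → ℝ), y = (f ^ k) (B.mulVec x)} with hTN
    have hTNtop : TN = ⊤ := by
      rw [eq_top_iff, ← hT]
      apply Submodule.span_mono
      rintro _ ⟨k, x, rfl⟩
      exact ⟨(k : ℕ), x, rfl⟩
    have hTNinv : ∀ w ∈ TN, f w ∈ TN := by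
      intro w hw
      induction hw using Submodule.span_induction with
      | mem w hw =>
        obtain ⟨k, x, rfl⟩ := hw
        refine Submodule.subset_span ⟨k + 1, x, ?_⟩
        rw [pow_succ']; rfl
      | zero => simp
      | add u v _ _ hu hv => rw [map_add]; exact Submodule.add_mem _ hu hv
      | smul c u _ hu => rw [map_smul]; exact Submodule.smul_mem _ _ hu
    have hTNmap : TN = Submodule.map (Phi f v) (J.restrictScalars ℝ) := by
      apply le_antisymm
      · rw [hTN, Submodule.span_le]
        rintro _ ⟨k, x, rfl⟩
        refine ⟨X ^ k * ∑ i, x i • g i, ?_, ?_⟩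
        · apply Ideal.mul_mem_left
          exact Submodule.sum_mem _ fun i _ => by
            rw [Polynomial.smul_eq_C_mul]
            exact Ideal.mul_mem_left _ _ (Ideal.subset_span ⟨i, rfl⟩)
        · rw [Phi_X_pow_mul, ← hBx]
      · rintro _ ⟨r, hr, rfl⟩
        have hr' : r ∈ J := hr
        induction hr' using Submodule.span_induction with
        | mem r hrm =>
          obtain ⟨i, rfl⟩ := hrm
          refine Submodule.subset_span ⟨0, Pi.single i 1, ?_⟩
          rw [pow_zero, hg i]; rfl
        | zero => simp
        | add u w hu hw ihu ihw => rw [map_add]; exact Submodule.add_mem _ (ihu hu) (ihw hw)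
        | smul c u hu ihu =>
          rw [smul_eq_mul, Phi_mul]
          exact aeval_apply_mem hTNinv c (ihu hu)
    have hsup : J ⊔ Ideal.span {p} = ⊤ := by
      rw [← hpK, ← Phi_map_eq_top_iff f v hsurj, ← hTNmap]
      exact hTNtop
    obtain ⟨x, hx⟩ := core p hp0 g (by rwa [← hJ])
    refine ⟨x, ?_⟩
    simp only [mulVec_pow, ← hf]
    -- coprime ⇒ single-vector controllability
    have hsup2 : Ideal.span {∑ i, x i • g i} ⊔ Ideal.span {p} = ⊤ := by
      rw [← Ideal.isCoprime_iff_sup_eq, Ideal.isCoprime_span_singleton_iff]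
      exact hx
    have hmap2 : Submodule.map (Phi f v) ((Ideal.span {∑ i, x i • g i}).restrictScalars ℝ) = ⊤ := by
      rw [Phi_map_eq_top_iff f v hsurj, hpK]
      exact hsup2
    have hNspan : Submodule.span ℝ
        (Set.range fun k : ℕ => (f ^ k) (Phi f v (∑ i, x i • g i))) = ⊤ := by
      rw [span_powers_eq_map]; exact hmap2
    rw [eq_top_iff, ← hNspan, Submodule.span_le]
    rintro _ ⟨k, rfl⟩
    rw [← hBx]
    exact pow_apply_mem_finSpan f hn (B.mulVec x) k
  · rintro ⟨x, hx⟩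
    rw [eq_top_iff, ← hx]
    apply Submodule.span_mono
    rintro _ ⟨k, rfl⟩
    exact ⟨k, x, rfl⟩
end

section
/- Let A ∈ ℝⁿˣⁿ have k invariant factors (equivalently, its rational canonical form consists of k companion blocks). If the system dx/dt = Ax + Bu with B ∈ ℝⁿˣᵐ is controllable on ℝⁿ, then m ≥ k. -/
open DirectSum Polynomial

/-- If `A ∈ ℝⁿˣⁿ` has `k` invariant factors (equivalently, its rational canonical form has
`k` companion blocks), i.e., `ℝⁿ` as an `ℝ[λ]`-module under `λ·x = Ax` decomposes as
`ℝ[λ]/⟨a₁⟩ ⊕ ... ⊕ ℝ[λ]/⟨aₖ⟩`, and the system `dx/dt = Ax + Bu` with `B ∈ ℝⁿˣᵐ` is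
controllable on `ℝⁿ`, then `m ≥ k`. -/
theorem stmt8 (n m k : ℕ) (A : Matrix (Fin n) (Fin n) ℝ) (B : Matrix (Fin n) (Fin m) ℝ)
    (a : Fin k → Polynomial ℝ)
    (hmonic : ∀ i, (a i).Monic) (hdeg : ∀ i, 0 < (a i).natDegree)
    (hchain : ∀ i j : Fin k, i ≤ j → a j ∣ a i)
    (hdecomp : Nonempty
      ((⨁ i : Fin k, Polynomial ℝ ⧸ Ideal.span {a i}) ≃ₗ[Polynomial ℝ]
        Module.AEval' (Matrix.mulVecLin A)))
    (hctrb : Submodule.span ℝ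
      {y : Fin n → ℝ | ∃ (j : Fin n) (x : Fin m → ℝ),
        y = (A ^ (j : ℕ)).mulVec (B.mulVec x)} = ⊤) :
    k ≤ m := by
  classical
  rcases Nat.eq_zero_or_pos k with hk | hk
  · omega
  obtain ⟨e⟩ := hdecomp
  set φ := Matrix.mulVecLin A with hφ
  set o := Module.AEval'.of φ with ho
  -- generators of the AEval' module: the columns of B
  set G : Fin m → Module.AEval' φ := fun i => o (B.mulVec (Pi.single i 1)) with hG
  -- powers of A correspond to powers of X
  have hpow : ∀ (j : ℕ) (w : Fin n → ℝ),
      o ((A ^ j).mulVec w) = (X : Polynomial ℝ) ^ j • o w := by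
    intro j
    induction j with
    | zero => intro w; simp
    | succ j ih =>
      intro w
      have h1 : (A ^ (j + 1)).mulVec w = (A ^ j).mulVec (A.mulVec w) := by
        rw [Matrix.mulVec_mulVec, ← pow_succ]
      have h2 : o (A.mulVec w) = (X : Polynomial ℝ) • o w := by
        have := Module.AEval'.X_smul_of φ w
        simpa [hφ, Matrix.mulVecLin_apply] using this.symm
      rw [h1, ih, h2, smul_smul, ← pow_succ]
  -- B *ᵥ x lies in the ℝ[X]-span of the columns of B
  have hBx : ∀ x : Fin m → ℝ,
      o (B.mulVec x) ∈ Submodule.span (Polynomial ℝ) (Set.range G) := by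
    intro x
    have hx1 : x = ∑ i, x i • (Pi.single i 1 : Fin m → ℝ) := by
      funext j
      simp [Finset.sum_apply, Pi.single_apply]
    have hx : o (B.mulVec x) = ∑ i, x i • o (B.mulVec (Pi.single i 1)) := by
      conv_lhs => rw [hx1, ← Matrix.mulVecLin_apply]
      simp [map_sum, map_smul, Matrix.mulVecLin_apply]
    rw [hx]
    refine Submodule.sum_mem _ fun i _ => ?_
    exact Submodule.smul_of_tower_mem _ _ (Submodule.subset_span ⟨i, rfl⟩)
  -- controllability ⇒ the columns of B generate the ℝ[X]-module
  have hspanM : Submodule.span (Polynomial ℝ) (Set.range G) = ⊤ := by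
    rw [Submodule.eq_top_iff']
    intro z
    have hz : (o.symm z : Fin n → ℝ) ∈ Submodule.span ℝ
        {y : Fin n → ℝ | ∃ (j : Fin n) (x : Fin m → ℝ),
          y = (A ^ (j : ℕ)).mulVec (B.mulVec x)} := by
      rw [hctrb]; trivial
    have key : ∀ y ∈ Submodule.span ℝ
        {y : Fin n → ℝ | ∃ (j : Fin n) (x : Fin m → ℝ),
          y = (A ^ (j : ℕ)).mulVec (B.mulVec x)},
        o y ∈ (Submodule.span (Polynomial ℝ) (Set.range G)).restrictScalars ℝ := by
      intro y hy
      refine Submodule.span_induction ?_ ?_ ?_ ?_ hy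
      · rintro y ⟨j, x, rfl⟩
        show o ((A ^ (j : ℕ)).mulVec (B.mulVec x)) ∈ Submodule.span (Polynomial ℝ) (Set.range G)
        rw [hpow]
        exact Submodule.smul_mem _ _ (hBx x)
      · simp
      · intro u v _ _ hu hv
        rw [map_add]
        exact add_mem hu hv
      · intro r u _ hu
        rw [map_smul]
        exact Submodule.smul_mem _ _ hu
    have := key _ hz
    rwa [LinearEquiv.apply_symm_apply] at this
  -- transfer to the direct sum of cyclic modules
  set g2 : Fin m → (⨁ i : Fin k, Polynomial ℝ ⧸ Ideal.span {a i}) :=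
    fun i => e.symm (G i) with hg2
  have hspanN : Submodule.span (Polynomial ℝ) (Set.range g2) = ⊤ := by
    have : Set.range g2 = e.symm '' Set.range G := by
      rw [hg2]; exact Set.range_comp (⇑e.symm) G
    rw [this, ← LinearEquiv.coe_coe, Submodule.span_image, hspanM, Submodule.map_top,
      LinearMap.range_eq_top]
    exact e.symm.surjective
  -- choose an irreducible factor of the last invariant factor
  set last : Fin k := ⟨k - 1, by omega⟩ with hlast
  obtain ⟨p, hpirr, hpdvd⟩ := WfDvdMonoid.exists_irreducible_factor
    (Polynomial.not_isUnit_of_natDegree_pos _ (hdeg last)) (hmonic last).ne_zero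
  have hpdvdall : ∀ i, p ∣ a i := fun i =>
    hpdvd.trans (hchain i last (by simp [hlast, Fin.le_def]; omega))
  letI : (Ideal.span {p}).IsMaximal := PrincipalIdealRing.isMaximal_of_irreducible hpirr
  letI : Field (Polynomial ℝ ⧸ Ideal.span {p}) := Ideal.Quotient.field _
  -- the quotient maps to ℝ[X]/(p)
  set fac : ∀ i : Fin k,
      (Polynomial ℝ ⧸ Ideal.span {a i}) →ₗ[Polynomial ℝ] Polynomial ℝ ⧸ Ideal.span {p} :=
    fun i => Submodule.mapQ _ _ (LinearMap.id : Polynomial ℝ →ₗ[Polynomial ℝ] Polynomial ℝ)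
      (fun x hx => Ideal.span_singleton_le_span_singleton.mpr (hpdvdall i) hx) with hfac
  have hfacsurj : ∀ i, Function.Surjective (fac i) := by
    intro i y
    obtain ⟨z, rfl⟩ := Submodule.Quotient.mk_surjective _ y
    exact ⟨Submodule.Quotient.mk z, by rw [hfac, Submodule.mapQ_apply]; rfl⟩
  -- assemble the surjection onto (ℝ[X]/(p))^k
  set Φ : (⨁ i : Fin k, Polynomial ℝ ⧸ Ideal.span {a i}) →ₗ[Polynomial ℝ]
      (Fin k → Polynomial ℝ ⧸ Ideal.span {p}) :=
    DirectSum.toModule (Polynomial ℝ) (Fin k) (Fin k → Polynomial ℝ ⧸ Ideal.span {p})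
      (fun i => LinearMap.single (Polynomial ℝ) (fun _ => Polynomial ℝ ⧸ Ideal.span {p}) i ∘ₗ
        fac i) with hΦ
  have hΦsurj : Function.Surjective Φ := by
    intro f
    have hsingle : ∀ j, ∃ y, Φ y = Pi.single j (f j) := by
      intro j
      obtain ⟨z, hz⟩ := hfacsurj j (f j)
      refine ⟨DirectSum.lof (Polynomial ℝ) (Fin k) _ j z, ?_⟩
      rw [hΦ, DirectSum.toModule_lof]
      simp [hz]
    choose y hy using hsingle
    refine ⟨∑ j, y j, ?_⟩
    rw [map_sum]
    simp only [hy]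
    exact Finset.univ_sum_single f
  -- (ℝ[X]/(p))^k is generated by m elements over ℝ[X], hence over ℝ[X]/(p)
  set h : Fin m → (Fin k → Polynomial ℝ ⧸ Ideal.span {p}) := fun i => Φ (g2 i) with hh
  have hspanP : Submodule.span (Polynomial ℝ) (Set.range h) = ⊤ := by
    have : Set.range h = Φ '' Set.range g2 := by
      rw [hh]; exact Set.range_comp (⇑Φ) g2
    rw [this, Submodule.span_image, hspanN, Submodule.map_top,
      LinearMap.range_eq_top]
    exact hΦsurj
  have hspanF : Submodule.span (Polynomial ℝ ⧸ Ideal.span {p}) (Set.range h) = ⊤ := by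
    have hle2 := Submodule.span_le_restrictScalars (Polynomial ℝ)
      (Polynomial ℝ ⧸ Ideal.span {p}) (Set.range h)
    rw [hspanP] at hle2
    rw [eq_top_iff]
    intro x _
    exact hle2 (by trivial)
  -- conclude by counting dimensions
  have hrk : Module.finrank (Polynomial ℝ ⧸ Ideal.span {p})
      (Fin k → Polynomial ℝ ⧸ Ideal.span {p}) ≤ m := by
    calc Module.finrank (Polynomial ℝ ⧸ Ideal.span {p})
          (Fin k → Polynomial ℝ ⧸ Ideal.span {p})
        = Module.finrank (Polynomial ℝ ⧸ Ideal.span {p})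
          (⊤ : Submodule (Polynomial ℝ ⧸ Ideal.span {p})
            (Fin k → Polynomial ℝ ⧸ Ideal.span {p})) := (finrank_top _ _).symm
      _ = Module.finrank (Polynomial ℝ ⧸ Ideal.span {p})
          (Submodule.span (Polynomial ℝ ⧸ Ideal.span {p}) (Set.range h)) := by rw [hspanF]
      _ ≤ Fintype.card (Fin m) := finrank_range_le_card h
      _ = m := Fintype.card_fin m
  simpa [Module.finrank_pi] using hrk
end

section
/- Suppose the single-input linear ensemble system dx/dt(t,β) = A(β)x(t,β) + b(β)u(t) on C(K,ℝⁿ) (K ⊆ ℝ compact) has diagonalizable A(β) with continuous real eigenvalue functions λ₁, ..., λₙ ∈ C(K,ℝ), and is uniformly ensemble controllable. Then each λᵢ is injective on K and the images λᵢ(K), λⱼ(K) are pairwise disjoint for i ≠ j. -/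
/-- Uniform ensemble controllability of the time-invariant linear ensemble system
`dx/dt(t,β) = A(β) x(t,β) + B(β) u(t)` on `C(K, ℝⁿ)`: every initial state can be steered
in finite time into any `ε`-neighborhood (sup norm) of any target state by an open-loop,
parameter-independent input. -/
def UniformEnsembleControllable {n m : ℕ} (K : Set ℝ)
    (A : K → Matrix (Fin n) (Fin n) ℝ) (B : K → Matrix (Fin n) (Fin m) ℝ) : Prop :=
  ∀ x0 xF : C(K, Fin n → ℝ), ∀ ε > (0:ℝ),
    ∃ T > (0:ℝ), ∃ (u : ℝ → Fin m → ℝ) (x : ℝ → K → Fin n → ℝ),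
      (∀ β, x 0 β = x0 β) ∧
      (∀ β t, HasDerivAt (fun s => x s β) ((A β).mulVec (x t β) + (B β).mulVec (u t)) t) ∧
      (∀ β, ‖x T β - xF β‖ < ε)

open Matrix

lemma dot_bound {n : ℕ} (v d : Fin n → ℝ) : |v ⬝ᵥ d| ≤ (∑ k, |v k|) * ‖d‖ := by
  calc |v ⬝ᵥ d| ≤ ∑ k, |v k * d k| := Finset.abs_sum_le_sum_abs _ _
    _ ≤ ∑ k, |v k| * ‖d‖ := by
        refine Finset.sum_le_sum fun k _ => ?_
        rw [abs_mul]
        exact mul_le_mul_of_nonneg_left ((Real.norm_eq_abs _ ▸ norm_le_pi_norm d k)) (abs_nonneg _)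
    _ = (∑ k, |v k|) * ‖d‖ := by rw [Finset.sum_mul]

lemma key {n : ℕ} {K : Set ℝ} (A : C(K, Matrix (Fin n) (Fin n) ℝ)) (b : C(K, Fin n → ℝ))
    (huec : UniformEnsembleControllable K (fun β => A β)
      (fun β => Matrix.of fun i (_ : Fin 1) => b β i))
    (β₁ β₂ : K) (μ α γ : ℝ) (v w : Fin n → ℝ)
    (hv : ∀ y : Fin n → ℝ, v ⬝ᵥ (A β₁).mulVec y = μ * (v ⬝ᵥ y))
    (hw : ∀ y : Fin n → ℝ, w ⬝ᵥ (A β₂).mulVec y = μ * (w ⬝ᵥ y))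
    (hcancel : α * (v ⬝ᵥ b β₁) + γ * (w ⬝ᵥ b β₂) = 0)
    (xF : C(K, Fin n → ℝ)) (hxF : α * (v ⬝ᵥ xF β₁) + γ * (w ⬝ᵥ xF β₂) = 1) : False := by
  set C : ℝ := |α| * ∑ k, |v k| + |γ| * ∑ k, |w k| with hCdef
  have hC : 0 ≤ C := by positivity
  obtain ⟨T, hT, u, x, hx0, hode, hclose⟩ := huec 0 xF (1/(C+1)) (by positivity)
  set f : ℝ → ℝ := fun t => α * (v ⬝ᵥ x t β₁) + γ * (w ⬝ᵥ x t β₂) with hfdef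
  -- dot product with input matrix
  have hB : ∀ (β : K) (z : Fin n → ℝ) (uu : Fin 1 → ℝ),
      z ⬝ᵥ (Matrix.of fun i (_ : Fin 1) => b β i).mulVec uu = (z ⬝ᵥ b β) * uu 0 := by
    intro β z uu
    simp only [dotProduct, Matrix.mulVec, Matrix.of_apply, Fin.sum_univ_one,
      Finset.sum_mul]
    exact Finset.sum_congr rfl fun k _ => by ring
  have hder : ∀ (β : K) (z : Fin n → ℝ) (t : ℝ),
      HasDerivAt (fun s => z ⬝ᵥ x s β)
        (z ⬝ᵥ ((A β).mulVec (x t β) + (Matrix.of fun i (_ : Fin 1) => b β i).mulVec (u t))) t := by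
    intro β z t
    have h := hode β t
    have h2 : ∀ k, HasDerivAt (fun s => x s β k)
        (((A β).mulVec (x t β) + (Matrix.of fun i (_ : Fin 1) => b β i).mulVec (u t)) k) t :=
      fun k => hasDerivAt_pi.mp h k
    have h3 := HasDerivAt.fun_sum (u := Finset.univ)
      (fun k _ => ((h2 k).const_mul (z k)))
    exact h3
  have hf : ∀ t, HasDerivAt f (μ * f t) t := by
    intro t
    have h1 := ((hder β₁ v t).const_mul α).add ((hder β₂ w t).const_mul γ)
    have e1 : α * (v ⬝ᵥ ((A β₁).mulVec (x t β₁) + (Matrix.of fun i (_ : Fin 1) => b β₁ i).mulVec (u t)))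
        + γ * (w ⬝ᵥ ((A β₂).mulVec (x t β₂) + (Matrix.of fun i (_ : Fin 1) => b β₂ i).mulVec (u t)))
        = μ * f t := by
      rw [dotProduct_add, dotProduct_add, hv, hw, hB, hB, hfdef]
      linear_combination u t 0 * hcancel
    rw [e1] at h1
    exact h1
  -- f 0 = 0
  have hf0 : f 0 = 0 := by
    simp only [hfdef, hx0]
    simp [dotProduct]
  -- f T = 0 via exp trick
  have hfT : f T = 0 := by
    set g : ℝ → ℝ := fun t => Real.exp (-μ * t) * f t with hgdef
    have hg : ∀ t, HasDerivAt g 0 t := by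
      intro t
      have he : HasDerivAt (fun s : ℝ => Real.exp (-μ * s)) (Real.exp (-μ * t) * (-μ)) t := by
        simpa using ((hasDerivAt_id t).const_mul (-μ)).exp
      have := he.fun_mul (hf t)
      exact this.congr_deriv (by ring)
    have hconst := is_const_of_deriv_eq_zero (f := g)
      (fun t => (hg t).differentiableAt) (fun t => (hg t).deriv) T 0
    have hgT : g T = 0 := by rw [hconst]; simp [hgdef, hf0]
    simp only [hgdef] at hgT
    rcases mul_eq_zero.mp hgT with h | h
    · exact absurd h (Real.exp_ne_zero _)
    · exact h
  -- contradiction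
  have hd1 := hclose β₁
  have hd2 := hclose β₂
  have key1 : f T - 1 = α * (v ⬝ᵥ (x T β₁ - xF β₁)) + γ * (w ⬝ᵥ (x T β₂ - xF β₂)) := by
    rw [dotProduct_sub, dotProduct_sub, hfdef]
    linear_combination hxF
  have hb1 := dot_bound v (x T β₁ - xF β₁)
  have hb2 := dot_bound w (x T β₂ - xF β₂)
  have h1 : |f T - 1| ≤ C * (1/(C+1)) := by
    rw [key1, hCdef]
    calc |α * (v ⬝ᵥ (x T β₁ - xF β₁)) + γ * (w ⬝ᵥ (x T β₂ - xF β₂))|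
        ≤ |α| * |v ⬝ᵥ (x T β₁ - xF β₁)| + |γ| * |w ⬝ᵥ (x T β₂ - xF β₂)| := by
          rw [← abs_mul, ← abs_mul]; exact abs_add_le _ _
      _ ≤ |α| * ((∑ k, |v k|) * (1/(C+1))) + |γ| * ((∑ k, |w k|) * (1/(C+1))) := by
          gcongr
          · exact hb1.trans (mul_le_mul_of_nonneg_left hd1.le (by positivity))
          · exact hb2.trans (mul_le_mul_of_nonneg_left hd2.le (by positivity))
      _ = (|α| * ∑ k, |v k| + |γ| * ∑ k, |w k|) * (1/(C+1)) := by ring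
  rw [hfT] at h1
  have h2 : (1:ℝ) ≤ C * (1/(C+1)) := by simpa using h1
  have h3 : C * (1/(C+1)) < 1 := by
    rw [mul_one_div, div_lt_one (by positivity)]; linarith
  linarith

lemma left_eig {n : ℕ} (M P : Matrix (Fin n) (Fin n) ℝ) (d : Fin n → ℝ) (hP : IsUnit P)
    (h : P⁻¹ * M * P = Matrix.diagonal d) (i : Fin n) :
    ∀ y : Fin n → ℝ, (fun k => P⁻¹ i k) ⬝ᵥ M.mulVec y = d i * ((fun k => P⁻¹ i k) ⬝ᵥ y) := by
  have hdet : IsUnit P.det := (Matrix.isUnit_iff_isUnit_det P).mp hP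
  have hPA : P⁻¹ * M = Matrix.diagonal d * P⁻¹ := by
    calc P⁻¹ * M = P⁻¹ * M * (P * P⁻¹) := by rw [Matrix.mul_nonsing_inv P hdet, mul_one]
      _ = (P⁻¹ * M * P) * P⁻¹ := by rw [← mul_assoc]
      _ = Matrix.diagonal d * P⁻¹ := by rw [h]
  intro y
  have h1 : ((P⁻¹ * M) *ᵥ y) i = ((Matrix.diagonal d * P⁻¹) *ᵥ y) i := by rw [hPA]
  rw [← Matrix.mulVec_mulVec, ← Matrix.mulVec_mulVec, Matrix.mulVec_diagonal] at h1
  exact h1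

lemma row_ne {n : ℕ} (P : Matrix (Fin n) (Fin n) ℝ) (hP : IsUnit P) (i : Fin n) :
    (fun k => P⁻¹ i k) ≠ 0 := by
  have hdet : IsUnit P.det := (Matrix.isUnit_iff_isUnit_det P).mp hP
  intro h0
  have h1 := Matrix.nonsing_inv_mul P hdet
  have h2 : (P⁻¹ * P) i i = (1 : Matrix (Fin n) (Fin n) ℝ) i i := by rw [h1]
  rw [Matrix.mul_apply, Matrix.one_apply_eq] at h2
  have h3 : ∀ l, P⁻¹ i l = 0 := fun l => congrFun h0 l
  simp [h3] at h2

lemma rows_indep {n : ℕ} (P : Matrix (Fin n) (Fin n) ℝ) (hP : IsUnit P) (i j : Fin n)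
    (hij : i ≠ j) (α γ : ℝ) (hαγ : ¬(α = 0 ∧ γ = 0)) :
    (fun k => α * P⁻¹ i k + γ * P⁻¹ j k) ≠ 0 := by
  have hdet : IsUnit P.det := (Matrix.isUnit_iff_isUnit_det P).mp hP
  intro h0
  have hinv := Matrix.nonsing_inv_mul P hdet
  have key : ∀ m, α * (P⁻¹ * P) i m + γ * (P⁻¹ * P) j m = 0 := by
    intro m
    have h1 : ∑ l, (α * P⁻¹ i l + γ * P⁻¹ j l) * P l m = 0 :=
      Finset.sum_eq_zero fun l _ => by rw [congrFun h0 l]; simp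
    rw [Matrix.mul_apply, Matrix.mul_apply, Finset.mul_sum, Finset.mul_sum,
      ← Finset.sum_add_distrib]
    rw [← h1]
    exact Finset.sum_congr rfl fun l _ => by ring
  have ki := key i
  have kj := key j
  rw [hinv] at ki kj
  rw [Matrix.one_apply_eq, Matrix.one_apply_ne (Ne.symm hij)] at ki
  rw [Matrix.one_apply_eq, Matrix.one_apply_ne hij] at kj
  simp at ki kj
  exact hαγ ⟨ki, kj⟩

lemma key2 {n : ℕ} {K : Set ℝ} (A : C(K, Matrix (Fin n) (Fin n) ℝ)) (b : C(K, Fin n → ℝ))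
    (huec : UniformEnsembleControllable K (fun β => A β)
      (fun β => Matrix.of fun i (_ : Fin 1) => b β i))
    (β₁ β₂ : K) (μ : ℝ) (v w : Fin n → ℝ)
    (hv : ∀ y : Fin n → ℝ, v ⬝ᵥ (A β₁).mulVec y = μ * (v ⬝ᵥ y))
    (hw : ∀ y : Fin n → ℝ, w ⬝ᵥ (A β₂).mulVec y = μ * (w ⬝ᵥ y))
    (htarget : ∀ α γ : ℝ, ¬(α = 0 ∧ γ = 0) →
      ∃ xF : C(K, Fin n → ℝ), α * (v ⬝ᵥ xF β₁) + γ * (w ⬝ᵥ xF β₂) = 1) : False := by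
  by_cases h1 : v ⬝ᵥ b β₁ = 0
  · obtain ⟨xF, hxF⟩ := htarget 1 0 (by simp)
    exact key A b huec β₁ β₂ μ 1 0 v w hv hw (by rw [h1]; ring) xF hxF
  · obtain ⟨xF, hxF⟩ := htarget (-(w ⬝ᵥ b β₂)) (v ⬝ᵥ b β₁) (by simp [h1])
    exact key A b huec β₁ β₂ μ _ _ v w hv hw (by ring) xF hxF

lemma single_cont {n : ℕ} {K : Set ℝ} (k : Fin n) (g : K → ℝ) (hg : Continuous g) :
    Continuous fun β : K => (Pi.single k (g β) : Fin n → ℝ) := by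
  refine continuous_pi fun l => ?_
  by_cases hl : l = k
  · subst hl; simpa [Pi.single_apply] using hg
  · simp only [Pi.single_apply, if_neg hl]
    exact continuous_const

/-- If the single-input linear ensemble system `dx/dt(t,β) = A(β)x(t,β) + b(β)u(t)` on
`C(K,ℝⁿ)` (`K` compact) has pointwise diagonalizable `A(β)` with continuous real eigenvalue
functions `λ₁, ..., λₙ`, and is uniformly ensemble controllable, then each `λᵢ` is injective
on `K` and the images `λᵢ(K)` are pairwise disjoint. -/
theorem stmt15 (n : ℕ) (K : Set ℝ) (hK : IsCompact K)
    (A : C(K, Matrix (Fin n) (Fin n) ℝ)) (b : C(K, Fin n → ℝ))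
    (lam : Fin n → C(K, ℝ))
    (hdiag : ∀ β : K, ∃ P : Matrix (Fin n) (Fin n) ℝ, IsUnit P ∧
      P⁻¹ * A β * P = Matrix.diagonal fun i => lam i β)
    (huec : UniformEnsembleControllable K (fun β => A β)
      (fun β => Matrix.of fun i (_ : Fin 1) => b β i)) :
    (∀ i, Function.Injective (lam i)) ∧
    (∀ i j : Fin n, i ≠ j →
      Set.range (lam i) ∩ Set.range (lam j) = ∅) := by
  have main : ∀ (i j : Fin n) (β₁ β₂ : K), (β₁ ≠ β₂ ∨ i ≠ j) → lam i β₁ ≠ lam j β₂ := by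
    intro i j β₁ β₂ hor heq
    by_cases hb : β₁ = β₂
    · subst hb
      have hij : i ≠ j := hor.resolve_left (fun h => h rfl)
      obtain ⟨P, hPu, hP⟩ := hdiag β₁
      refine key2 A b huec β₁ β₁ (lam i β₁) (fun k => P⁻¹ i k) (fun k => P⁻¹ j k)
        (left_eig (A β₁) P _ hPu hP i) ?_ ?_
      · intro y
        have h := left_eig (A β₁) P _ hPu hP j y
        rw [← heq] at h
        exact h
      · intro α γ hαγ
        have hz := rows_indep P hPu i j hij α γ hαγ
        obtain ⟨k, hk⟩ := Function.ne_iff.mp hz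
        simp only [Pi.zero_apply] at hk
        refine ⟨ContinuousMap.const _
          (Pi.single k ((α * P⁻¹ i k + γ * P⁻¹ j k)⁻¹)), ?_⟩
        simp only [ContinuousMap.const_apply, dotProduct_single]
        have e : α * (P⁻¹ i k * (α * P⁻¹ i k + γ * P⁻¹ j k)⁻¹)
            + γ * (P⁻¹ j k * (α * P⁻¹ i k + γ * P⁻¹ j k)⁻¹)
            = (α * P⁻¹ i k + γ * P⁻¹ j k) * (α * P⁻¹ i k + γ * P⁻¹ j k)⁻¹ := by ring
        rw [e, mul_inv_cancel₀ hk]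
    · obtain ⟨P₁, hP₁u, hP₁⟩ := hdiag β₁
      obtain ⟨P₂, hP₂u, hP₂⟩ := hdiag β₂
      have hco : (β₁ : ℝ) ≠ (β₂ : ℝ) := fun h => hb (Subtype.ext h)
      refine key2 A b huec β₁ β₂ (lam i β₁) (fun k => P₁⁻¹ i k) (fun k => P₂⁻¹ j k)
        (left_eig (A β₁) P₁ _ hP₁u hP₁ i) ?_ ?_
      · intro y
        have h := left_eig (A β₂) P₂ _ hP₂u hP₂ j y
        rw [← heq] at h
        exact h
      · intro α γ hαγ
        by_cases hα : α = 0
        · have hγ : γ ≠ 0 := fun h => hαγ ⟨hα, h⟩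
          obtain ⟨k, hk⟩ := Function.ne_iff.mp (row_ne P₂ hP₂u j)
          simp only [Pi.zero_apply] at hk
          have hsub : (β₂ : ℝ) - (β₁ : ℝ) ≠ 0 := sub_ne_zero.mpr (Ne.symm hco)
          refine ⟨⟨fun β => Pi.single k
              (((β : ℝ) - (β₁ : ℝ)) * (((β₂:ℝ) - (β₁:ℝ))⁻¹ * (γ * P₂⁻¹ j k)⁻¹)),
              single_cont k _ ((continuous_subtype_val.sub continuous_const).mul
                continuous_const)⟩, ?_⟩
          simp only [ContinuousMap.coe_mk, dotProduct_single, hα, zero_mul, zero_add]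
          set p : ℝ := P₂⁻¹ j k with hp
          have e : γ * (p * (((β₂:ℝ) - (β₁:ℝ)) * ((((β₂:ℝ) - (β₁:ℝ)))⁻¹ * (γ * p)⁻¹)))
              = ((((β₂:ℝ) - (β₁:ℝ))) * (((β₂:ℝ) - (β₁:ℝ)))⁻¹) * ((γ * p) * (γ * p)⁻¹) := by
            ring
          rw [e, mul_inv_cancel₀ hsub, mul_inv_cancel₀ (mul_ne_zero hγ hk), mul_one]
        · obtain ⟨k, hk⟩ := Function.ne_iff.mp (row_ne P₁ hP₁u i)
          simp only [Pi.zero_apply] at hk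
          have hsub : (β₁ : ℝ) - (β₂ : ℝ) ≠ 0 := sub_ne_zero.mpr hco
          refine ⟨⟨fun β => Pi.single k
              (((β : ℝ) - (β₂ : ℝ)) * (((β₁:ℝ) - (β₂:ℝ))⁻¹ * (α * P₁⁻¹ i k)⁻¹)),
              single_cont k _ ((continuous_subtype_val.sub continuous_const).mul
                continuous_const)⟩, ?_⟩
          simp only [ContinuousMap.coe_mk, dotProduct_single, sub_self, zero_mul,
            mul_zero, add_zero]
          set p : ℝ := P₁⁻¹ i k with hp
          have e : α * (p * (((β₁:ℝ) - (β₂:ℝ)) * ((((β₁:ℝ) - (β₂:ℝ)))⁻¹ * (α * p)⁻¹)))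
              = ((((β₁:ℝ) - (β₂:ℝ))) * (((β₁:ℝ) - (β₂:ℝ)))⁻¹) * ((α * p) * (α * p)⁻¹) := by
            ring
          rw [e, mul_inv_cancel₀ hsub, mul_inv_cancel₀ (mul_ne_zero hα hk), mul_one]
  constructor
  · intro i β₁ β₂ h
    by_contra hne
    exact main i i β₁ β₂ (Or.inl hne) h
  · intro i j hij
    rw [Set.eq_empty_iff_forall_notMem]
    rintro μ ⟨⟨β₁, h1⟩, ⟨β₂, h2⟩⟩
    exact main i j β₁ β₂ (Or.inr hij) (h1.trans h2.symm)
end
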